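/- Let F be the Fourier matrix of order N², with entries F_{kl} = exp(2πi·kl/N²)/N for k,l ∈ {0,1,…,N²−1}. Then the reshuffled matrix F^R is unitary; equivalently, all N² singular values of F^R equal 1. -/

import Mathlib

/-!
Write `ω` for a primitive `N²`-th root of unity and `ζ = ω ^ N`. In
`(Nm + n)(Nμ + ν) = N²mμ + N(mν + nμ) + nν` the first term dies modulo `N²`, and the last one
depends only on the column `(n, ν)` of the reshuffled matrix, so it cancels against its conjugate
in the inner product of two rows. What remains of the inner product of rows `(m, μ)` and
`(m', μ')` is `N⁻² (∑_n ζ^((μ - μ')n)) (∑_ν ζ^((m - m')ν)) = δ_{mm'} δ_{μμ'}` by orthogonality of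
`N`-th roots of unity.
-/

open Matrix

/-- Reshuffling of a matrix acting on a bipartite index set:
`(X^R)_{(m,μ),(n,ν)} = X_{(m,n),(μ,ν)}`. -/
def reshuffle {N : ℕ} (X : Matrix (Fin N × Fin N) (Fin N × Fin N) ℂ) :
    Matrix (Fin N × Fin N) (Fin N × Fin N) ℂ :=
  Matrix.of fun p q => X (p.1, q.1) (p.2, q.2)

open Finset Complex

namespace IsPrimitiveRoot

variable {K : Type*} [Field K] {ζ : K} {N : ℕ}

theorem sum_range_zpow_mul_eq_ite (hζ : IsPrimitiveRoot ζ N) (j : ℤ) :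
    ∑ r ∈ range N, ζ ^ (j * r) = if (N : ℤ) ∣ j then (N : K) else 0 := by
  simp_rw [_root_.zpow_mul, zpow_natCast]
  split_ifs with hj
  · simp [(hζ.zpow_eq_one_iff_dvd j).2 hj]
  · have hζj : ζ ^ j ≠ 1 := mt (hζ.zpow_eq_one_iff_dvd j).1 hj
    have hζjN : (ζ ^ j) ^ N = 1 := by
      rw [← zpow_natCast, ← _root_.zpow_mul, hζ.zpow_eq_one_iff_dvd]
      exact dvd_mul_left _ _
    rw [geom_sum_eq hζj, hζjN, sub_self, zero_div]

theorem sum_fin_zpow_sub_mul_eq_ite (hζ : IsPrimitiveRoot ζ N) (a b : Fin N) :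
    ∑ r : Fin N, ζ ^ (((a : ℤ) - b) * r) = if a = b then (N : K) else 0 := by
  have hdvd : (N : ℤ) ∣ (a : ℤ) - b ↔ a = b := by
    rw [← Nat.modEq_iff_dvd, Fin.ext_iff]
    exact ⟨fun h => (h.eq_of_lt_of_lt b.isLt a.isLt).symm, fun h => h ▸ rfl⟩
  rw [Fin.sum_univ_eq_sum_range (fun r => ζ ^ (((a : ℤ) - b) * r)),
    hζ.sum_range_zpow_mul_eq_ite, if_congr hdvd rfl rfl]

end IsPrimitiveRoot

theorem Complex.star_eq_inv_of_pow_eq_one {ω : ℂ} {n : ℕ} (h : ω ^ n = 1) (hn : n ≠ 0) :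
    star ω = ω⁻¹ :=
  (inv_eq_conj (norm_eq_one_of_pow_eq_one h hn)).symm

/-- The Fourier matrix of order `N²` built on `ω`, the pair `(m, μ)` standing for the index
`N m + μ`. -/
noncomputable def fourierMatrix (N : ℕ) (ω : ℂ) : Matrix (Fin N × Fin N) (Fin N × Fin N) ℂ :=
  Matrix.of fun p q => ω ^ ((N * p.1 + p.2) * (N * q.1 + q.2) : ℕ) / N

section

variable {N : ℕ} {ω : ℂ}

theorem reshuffle_fourierMatrix_mul_star_apply (hω : IsPrimitiveRoot ω (N ^ 2)) (hN : N ≠ 0)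
    (p q r : Fin N × Fin N) :
    reshuffle (fourierMatrix N ω) p r * star (reshuffle (fourierMatrix N ω) q r) =
      (ω ^ N) ^ (((p.2 : ℤ) - q.2) * r.1) * (ω ^ N) ^ (((p.1 : ℤ) - q.1) * r.2) / N ^ 2 := by
  have hN2 : N ^ 2 ≠ 0 := pow_ne_zero 2 hN
  have hω0 : ω ≠ 0 := hω.ne_zero hN2
  simp only [reshuffle, fourierMatrix, Matrix.of_apply, star_div₀, star_pow, star_natCast,
    star_eq_inv_of_pow_eq_one hω.pow_eq_one hN2]
  rw [div_mul_div_comm, ← sq, inv_pow, ← zpow_natCast, ← zpow_natCast, ← _root_.zpow_neg,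
    ← zpow_add₀ hω0, ← zpow_natCast ω N, ← _root_.zpow_mul, ← _root_.zpow_mul, ← zpow_add₀ hω0]
  congr 1
  have hexp : ((((N * p.1 + r.1) * (N * p.2 + r.2) : ℕ) : ℤ) -
      ((N * q.1 + r.1) * (N * q.2 + r.2) : ℕ)) =
      (N ^ 2 : ℕ) * ((p.1 : ℤ) * p.2 - q.1 * q.2) +
        (N * (((p.2 : ℤ) - q.2) * r.1) + N * (((p.1 : ℤ) - q.1) * r.2)) := by
    push_cast
    ring
  rw [← sub_eq_add_neg, hexp, zpow_add₀ hω0, _root_.zpow_mul, zpow_natCast, hω.pow_eq_one,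
    _root_.one_zpow, one_mul]

theorem reshuffle_fourierMatrix_mem_unitaryGroup (hω : IsPrimitiveRoot ω (N ^ 2)) :
    reshuffle (fourierMatrix N ω) ∈ Matrix.unitaryGroup (Fin N × Fin N) ℂ := by
  rw [Matrix.mem_unitaryGroup_iff]
  ext p q
  have hN : 0 < N := Fin.pos p.1
  have hζ : IsPrimitiveRoot (ω ^ N) N := IsPrimitiveRoot.pow (pow_pos hN 2) hω (sq N)
  calc (reshuffle (fourierMatrix N ω) * star (reshuffle (fourierMatrix N ω))) p q
      = ∑ r : Fin N × Fin N,
          reshuffle (fourierMatrix N ω) p r * star (reshuffle (fourierMatrix N ω) q r) := by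
        simp only [Matrix.mul_apply, Matrix.star_apply]
    _ = (∑ r₁ : Fin N, (ω ^ N) ^ (((p.2 : ℤ) - q.2) * r₁)) *
          (∑ r₂ : Fin N, (ω ^ N) ^ (((p.1 : ℤ) - q.1) * r₂)) / N ^ 2 := by
        simp only [reshuffle_fourierMatrix_mul_star_apply hω hN.ne', Fintype.sum_prod_type,
          ← Finset.sum_div, Finset.sum_mul_sum]
    _ = (1 : Matrix (Fin N × Fin N) (Fin N × Fin N) ℂ) p q := by
        rw [hζ.sum_fin_zpow_sub_mul_eq_ite, hζ.sum_fin_zpow_sub_mul_eq_ite, Matrix.one_apply]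
        split_ifs <;> simp_all [Prod.ext_iff, ← sq, hN.ne']

end

theorem reshuffled_fourier_unitary (N : ℕ) (hN : 0 < N)
    (F : Matrix (Fin N × Fin N) (Fin N × Fin N) ℂ)
    (hF : ∀ p q : Fin N × Fin N,
      F p q = (1 / (N : ℂ)) *
        Complex.exp (2 * (Real.pi : ℂ) * Complex.I *
          (((N * (p.1 : ℕ) + (p.2 : ℕ)) * (N * (q.1 : ℕ) + (q.2 : ℕ)) : ℕ) : ℂ) /
          (N : ℂ) ^ 2)) :
    reshuffle F ∈ Matrix.unitaryGroup (Fin N × Fin N) ℂ := by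
  have hω : IsPrimitiveRoot (exp (2 * Real.pi * I / N ^ 2)) (N ^ 2) := by
    exact_mod_cast isPrimitiveRoot_exp (N ^ 2) (pow_ne_zero 2 hN.ne')
  have hF_eq : F = fourierMatrix N (exp (2 * Real.pi * I / N ^ 2)) := by
    ext p q
    rw [hF, fourierMatrix, Matrix.of_apply, ← exp_nat_mul]
    ring_nf
  exact hF_eq ▸ reshuffle_fourierMatrix_mem_unitaryGroup hω
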